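/- Let n ≥ 2, q ≥ 2, and let D be an acyclic digraph with C(D) = H(n,q) ∪ I_k, with acyclic ordering z_1,...,z_k, v_1,...,v_{q^n} (isolated vertices first). For U_i = {v_1,...,v_i}, the number of maximal cliques of H(n,q) meeting U_i is at most k + i - 1. -/

import Mathlib

/-- The Hamming graph H(n,q): vertices are n-tuples over [q],
adjacent iff Hamming distance is 1. -/
def hamming (n q : ℕ) : SimpleGraph (Fin n → Fin q) where
  Adj x y := hammingDist x y = 1
  symm := ⟨fun x y h => (hammingDist_comm y x).trans h⟩
  loopless := ⟨fun x h => by simp [hammingDist_self] at h⟩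

/-!
Every vertex of H(n,q) has a neighbour, so a maximal clique `S` meeting `U_i` in `x` contains a
second vertex `y`. Since `x` and `y` are adjacent in `C(D)`, they have a common prey `w`, which
precedes `x` and is therefore one of the first `k + i - 1` vertices. The prey of `w` in H(n,q) form
a clique, and a clique sharing two vertices with a maximal clique (a line) lies inside it; hence
two maximal cliques sharing two prey of `w` coincide, and `S ↦ w` is injective.
-/

open Function

section Hamming

variable {n q : ℕ}

def hammingLine (j : Fin n) (x : Fin n → Fin q) : Set (Fin n → Fin q) :=
  {p | ∀ m, m ≠ j → p m = x m}

lemma mem_hammingLine_self (j : Fin n) (x : Fin n → Fin q) : x ∈ hammingLine j x :=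
  fun _ _ => rfl

lemma eq_of_mem_hammingLine_of_apply_eq {j : Fin n} {x y : Fin n → Fin q}
    (hy : y ∈ hammingLine j x) (hj : y j = x j) : y = x := by
  funext m
  by_cases hm : m = j
  · exact hm ▸ hj
  · exact hy m hm

lemma hamming_adj_iff {x y : Fin n → Fin q} :
    (hamming n q).Adj x y ↔ x ≠ y ∧ ∃ j, y ∈ hammingLine j x := by
  change hammingDist x y = 1 ↔ _
  constructor
  · intro h
    refine ⟨hammingDist_ne_zero.mp (by omega), ?_⟩
    obtain ⟨j, hj⟩ := Finset.card_eq_one.mp h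
    refine ⟨j, fun m hm => by_contra fun hne => hm ?_⟩
    simpa [hj] using (Finset.ext_iff.mp hj m).mp (by simpa using Ne.symm hne)
  · rintro ⟨hne, j, hj⟩
    have hsub : (Finset.univ.filter fun m => x m ≠ y m) ⊆ {j} := fun m hm => by
      by_contra hmj
      exact (Finset.mem_filter.mp hm).2 (hj m (by simpa using hmj)).symm
    have hpos := Nat.pos_of_ne_zero (hammingDist_ne_zero.mpr hne)
    have := Finset.card_le_card hsub
    simp only [Finset.card_singleton] at this
    exact le_antisymm this hpos

lemma hamming_exists_adj (hn : 0 < n) (hq : 2 ≤ q) (x : Fin n → Fin q) :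
    ∃ y, (hamming n q).Adj x y := by
  have : Nontrivial (Fin q) := Fin.nontrivial_iff_two_le.mpr hq
  let j : Fin n := ⟨0, hn⟩
  obtain ⟨c, hc⟩ := exists_ne (x j)
  refine ⟨update x j c, hamming_adj_iff.mpr ⟨fun h => hc ?_, j, fun m hm => update_of_ne hm _ _⟩⟩
  simpa using (congrFun h j).symm

lemma hamming_isClique_hammingLine (j : Fin n) (x : Fin n → Fin q) :
    (hamming n q).IsClique (hammingLine j x) := fun _ hp _ hr hne =>
  hamming_adj_iff.mpr ⟨hne, j, fun m hm => (hr m hm).trans (hp m hm).symm⟩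

lemma mem_hammingLine_of_adj_of_adj {j : Fin n} {x y z : Fin n → Fin q} (hxy : x ≠ y)
    (hy : y ∈ hammingLine j x) (hzx : (hamming n q).Adj x z) (hzy : (hamming n q).Adj y z) :
    z ∈ hammingLine j x := by
  obtain ⟨hxz, a, hza⟩ := hamming_adj_iff.mp hzx
  obtain ⟨-, b, hzb⟩ := hamming_adj_iff.mp hzy
  by_cases haj : a = j
  · exact haj ▸ hza
  have hzj : z j = x j := hza j (Ne.symm haj)
  have hyj : y j ≠ x j := fun h => hxy (eq_of_mem_hammingLine_of_apply_eq hy h).symm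
  -- `z j = x j ≠ y j`, so `j` is the coordinate in which `z` and `y` differ
  have hbj : b = j := by_contra fun hbj => hyj (hzj ▸ (hzb j (Ne.symm hbj)).symm)
  subst hbj
  exact absurd (eq_of_mem_hammingLine_of_apply_eq hza ((hzb a haj).trans (hy a haj))).symm hxz

lemma SimpleGraph.IsClique.subset_hammingLine {P : Set (Fin n → Fin q)}
    (hP : (hamming n q).IsClique P) {j : Fin n} {x y : Fin n → Fin q} (hx : x ∈ P) (hyP : y ∈ P)
    (hxy : x ≠ y) (hy : y ∈ hammingLine j x) : P ⊆ hammingLine j x := by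
  intro z hz
  by_cases hzx : z = x
  · exact hzx ▸ mem_hammingLine_self j x
  by_cases hzy : z = y
  · exact hzy ▸ hy
  exact mem_hammingLine_of_adj_of_adj hxy hy (hP hx hz (Ne.symm hzx)) (hP hyP hz (Ne.symm hzy))

/-- In H(n,q) the maximal cliques are the lines, and two vertices span at most one line. -/
lemma hamming_subset_of_maximal {P S : Set (Fin n → Fin q)} (hP : (hamming n q).IsClique P)
    (hS : Maximal (hamming n q).IsClique S) (hPS : (P ∩ S).Nontrivial) : P ⊆ S := by
  obtain ⟨x, ⟨hxP, hxS⟩, y, ⟨hyP, hyS⟩, hxy⟩ := hPS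
  obtain ⟨-, j, hy⟩ := hamming_adj_iff.mp (hP hxP hyP hxy)
  have hSline : S = hammingLine j x :=
    hS.eq_of_subset (hamming_isClique_hammingLine j x) (hS.1.subset_hammingLine hxS hyS hxy hy)
  exact hSline ▸ hP.subset_hammingLine hxP hyP hxy hy

end Hamming

section Competition

variable {α ι : Type*}

/-- `C(D) = G ∪ I_ι`: the competition graph of `D` is `G` on `α` together with the isolated
vertices `ι`. -/
def IsCompetitionGraphWithIsolated (D : α ⊕ ι → α ⊕ ι → Prop) (G : SimpleGraph α) : Prop :=
  ∀ a b, (a ≠ b ∧ ∃ w, D a w ∧ D b w) ↔ ∃ u v, a = Sum.inl u ∧ b = Sum.inl v ∧ G.Adj u v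

variable {D : α ⊕ ι → α ⊕ ι → Prop} {G : SimpleGraph α}

lemma IsCompetitionGraphWithIsolated.exists_common_prey
    (hD : IsCompetitionGraphWithIsolated D G) {u v : α} (huv : G.Adj u v) :
    ∃ w, D (.inl u) w ∧ D (.inl v) w :=
  ((hD _ _).mpr ⟨u, v, rfl, rfl, huv⟩).2

lemma IsCompetitionGraphWithIsolated.isClique_prey
    (hD : IsCompetitionGraphWithIsolated D G) (w : α ⊕ ι) :
    G.IsClique {u | D (.inl u) w} := by
  intro u hu v hv huv
  obtain ⟨u', v', hu', hv', huv'⟩ := (hD _ _).mp ⟨fun h => huv (Sum.inl_injective h), w, hu, hv⟩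
  rwa [Sum.inl_injective hu', Sum.inl_injective hv']

lemma eq_of_maximal_of_nontrivial_inter
    (hsub : ∀ P S, G.IsClique P → Maximal G.IsClique S → (P ∩ S).Nontrivial → P ⊆ S)
    {P S S' : Set α} (hP : G.IsClique P) (hS : Maximal G.IsClique S)
    (hS' : Maximal G.IsClique S') (hPS : (P ∩ S).Nontrivial) (hPS' : (P ∩ S').Nontrivial) :
    S = S' := by
  have hPsub : P ⊆ S := hsub P S hP hS hPS
  have hS'S : (S' ∩ S).Nontrivial :=
    hPS'.mono fun x ⟨hxP, hxS'⟩ => ⟨hxS', hPsub hxP⟩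
  exact (hS'.eq_of_subset hS.1 (hsub S' S hS'.1 hS hS'S)).symm

lemma nontrivial_of_maximal_isClique (hadj : ∀ x, ∃ y, G.Adj x y) {S : Set α}
    (hS : Maximal G.IsClique S) {x : α} (hx : x ∈ S) : S.Nontrivial := by
  by_contra h
  obtain ⟨y, hxy⟩ := hadj x
  have hsub : S ⊆ {x, y} := fun z hz => .inl (Set.not_nontrivial_iff.mp h hz hx)
  have hyS : y ∈ S := (hS.eq_of_subset (G.isClique_pair.mpr fun _ => hxy) hsub) ▸ .inr rfl
  exact h ⟨x, hx, y, hyS, hxy.ne⟩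

lemma IsCompetitionGraphWithIsolated.exists_prey_of_maximal
    (hD : IsCompetitionGraphWithIsolated D G) (hadj : ∀ x, ∃ y, G.Adj x y) {r : α ⊕ ι → ℕ}
    (hr : ∀ a b, D a b → r b < r a) {S : Set α} (hS : Maximal G.IsClique S) {x : α}
    (hx : x ∈ S) : ∃ w, r w < r (.inl x) ∧ ({u | D (.inl u) w} ∩ S).Nontrivial := by
  obtain ⟨y, hyS, hyx⟩ := (nontrivial_of_maximal_isClique hadj hS hx).exists_ne x
  obtain ⟨w, hxw, hyw⟩ := hD.exists_common_prey (hS.1 hx hyS hyx.symm)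
  exact ⟨w, hr _ _ hxw, x, ⟨hxw, hx⟩, y, ⟨hyw, hyS⟩, hyx.symm⟩

theorem IsCompetitionGraphWithIsolated.ncard_maximal_meeting_le
    (hD : IsCompetitionGraphWithIsolated D G) (hadj : ∀ x, ∃ y, G.Adj x y)
    (hsub : ∀ P S, G.IsClique P → Maximal G.IsClique S → (P ∩ S).Nontrivial → P ⊆ S)
    {r : α ⊕ ι → ℕ} (hr_inj : Injective r) (hr : ∀ a b, D a b → r b < r a) (m : ℕ) :
    {S | Maximal G.IsClique S ∧ ∃ x ∈ S, r (.inl x) < m}.ncard ≤ m - 1 := by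
  have key : ∀ S : {S | Maximal G.IsClique S ∧ ∃ x ∈ S, r (.inl x) < m},
      ∃ w, r w < m - 1 ∧ ({u | D (.inl u) w} ∩ S).Nontrivial := by
    rintro ⟨S, hS, x, hx, hxm⟩
    obtain ⟨w, hwx, hw⟩ := hD.exists_prey_of_maximal hadj hr hS hx
    exact ⟨w, by omega, hw⟩
  choose w hwm hw using key
  calc _ = Nat.card {S | Maximal G.IsClique S ∧ ∃ x ∈ S, r (.inl x) < m} := rfl
    _ ≤ Nat.card (Fin (m - 1)) := by
      refine Nat.card_le_card_of_injective (fun S => ⟨r (w S), hwm S⟩) ?_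
      intro S S' h
      have hww : w S = w S' := hr_inj (Fin.val_eq_of_eq h)
      exact Subtype.ext <| eq_of_maximal_of_nontrivial_inter hsub (hD.isClique_prey (w S)) S.2.1
        S'.2.1 (hw S) (hww ▸ hw S')
    _ = m - 1 := by simp

end Competition

theorem maximal_cliques_meeting_initial_segment_general (n q k : ℕ) (hn : 2 ≤ n) (hq : 2 ≤ q)
    (D : ((Fin n → Fin q) ⊕ Fin k) → ((Fin n → Fin q) ⊕ Fin k) → Prop)
    (hcomp : ∀ a b, (a ≠ b ∧ ∃ w, D a w ∧ D b w) ↔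
      ∃ u v, a = Sum.inl u ∧ b = Sum.inl v ∧ (hamming n q).Adj u v)
    (f : ((Fin n → Fin q) ⊕ Fin k) ≃ Fin (k + q ^ n))
    (hord : ∀ a b, D a b → (f b : ℕ) < (f a : ℕ))
    (i : ℕ) :
    {S : Set (Fin n → Fin q) |
        ((hamming n q).IsClique S ∧
          (∀ T, (hamming n q).IsClique T → S ⊆ T → T = S)) ∧
        ∃ x ∈ S, (f (Sum.inl x) : ℕ) < k + i}.ncard ≤ k + i - 1 := by
  have hmax : ∀ S, ((hamming n q).IsClique S ∧ ∀ T, (hamming n q).IsClique T → S ⊆ T → T = S) ↔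
      Maximal (hamming n q).IsClique S := fun S => by
    simp only [maximal_iff, eq_comm]
  simp only [hmax]
  exact IsCompetitionGraphWithIsolated.ncard_maximal_meeting_le (G := hamming n q) hcomp
    (hamming_exists_adj (by omega) hq) (fun _ _ => hamming_subset_of_maximal)
    (Fin.val_injective.comp f.injective) hord (k + i)

/-- Lemma 7 of the paper: if D is an acyclic digraph with C(D) = H(n,q) ∪ I_k and an
acyclic ordering listing the k isolated vertices first, then for 1 ≤ i ≤ qⁿ the number
of maximal cliques of H(n,q) meeting the first i vertices of H(n,q) is at most k+i-1. -/
theorem maximal_cliques_meeting_initial_segment (n q k : ℕ) (hn : 2 ≤ n) (hq : 2 ≤ q)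
    (D : ((Fin n → Fin q) ⊕ Fin k) → ((Fin n → Fin q) ⊕ Fin k) → Prop)
    (hacyc : ∀ w, ¬ Relation.TransGen D w w)
    (hcomp : ∀ a b, (a ≠ b ∧ ∃ w, D a w ∧ D b w) ↔
      ∃ u v, a = Sum.inl u ∧ b = Sum.inl v ∧ (hamming n q).Adj u v)
    (f : ((Fin n → Fin q) ⊕ Fin k) ≃ Fin (k + q ^ n))
    (hord : ∀ a b, D a b → (f b : ℕ) < (f a : ℕ))
    (hiso : ∀ z : Fin k, (f (Sum.inr z) : ℕ) < k)
    (i : ℕ) (hi1 : 1 ≤ i) (hi2 : i ≤ q ^ n) :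
    {S : Set (Fin n → Fin q) |
        ((hamming n q).IsClique S ∧
          (∀ T, (hamming n q).IsClique T → S ⊆ T → T = S)) ∧
        ∃ x ∈ S, (f (Sum.inl x) : ℕ) < k + i}.ncard ≤ k + i - 1 :=
  maximal_cliques_meeting_initial_segment_general n q k hn hq D hcomp f hord i
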